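/- arXiv:2401.07522 — 3 statements merged into one kernel-verified Lean document; each statement's English description precedes it below -/
import Mathlib

section
/- Under the smoothness assumptions on the taper h (symmetric, supported on [−1/2,1/2], twice differentiable on ℝ), there is a constant C such that for all λ > 0 and all m ∈ ℤ, ∫_ℝ |B_λ(u) B_λ(ω_m − u) · u| du ≤ C and ∫_ℝ |B_λ(u) B_λ(ω_m − u) · u²| du ≤ C/λ. -/
open MeasureTheory Real

/-- The frequency window `B_λ(u) = ∫_{−λ/2}^{λ/2} h(s/λ) exp(−i s u) ds` of a taper `h`. -/
noncomputable def freqWindow (h : ℝ → ℝ) (lam : ℝ) (u : ℝ) : ℂ :=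
  ∫ s in (-(lam / 2))..(lam / 2),
    (h (s / lam) : ℂ) * Complex.exp (-(Complex.I * (s : ℂ) * (u : ℂ)))

/-!
Substituting `s = λt` gives `B_λ(u) = λ ĥ(λu/2π)`, where `ĥ` is the Fourier transform of `h`.
As `h` is `C²` with compact support, `ĥ(ξ) (2πiξ)²` is the Fourier transform of `h''`, so
`|ĥ(ξ)| (1 + (2πξ)²) ≤ ‖h‖₁ + ‖h''‖₁ =: K`, that is `|B_λ(u)| (1 + (λu)²) ≤ λK`.
Hence `|B_λ(u)| |u| ≤ K/2` and `|B_λ(u)| u² ≤ K/λ`, while `|B_λ(ω - u)|` is dominated by a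
rescaled Cauchy density of total mass `Kπ`.
-/

open scoped FourierTransform

section FourierDecay

variable {E : Type*} [NormedAddCommGroup E] [NormedSpace ℂ E]

theorem norm_fourier_mul_sq_le_integral_norm_deriv_deriv {f : ℝ → E} (hf : ContDiff ℝ 2 f)
    (hfc : HasCompactSupport f) (w : ℝ) :
    ‖𝓕 f w‖ * (2 * π * w) ^ 2 ≤ ∫ v, ‖deriv (deriv f) v‖ := by
  have hf' : ContDiff ℝ 1 (deriv f) := hf.iterate_deriv' 1 1
  have hfc' : HasCompactSupport (deriv f) := hfc.deriv
  have hderiv : 𝓕 (deriv (deriv f)) w = (2 * π * Complex.I * w) ^ 2 • 𝓕 f w := by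
    rw [Real.fourier_deriv (hf'.continuous.integrable_of_hasCompactSupport hfc')
      (hf'.differentiable one_ne_zero)
      ((hf'.continuous_deriv le_rfl).integrable_of_hasCompactSupport hfc'.deriv),
      Real.fourier_deriv (hf.continuous.integrable_of_hasCompactSupport hfc)
      (hf.differentiable two_ne_zero) (hf'.continuous.integrable_of_hasCompactSupport hfc'),
      pow_two, mul_smul]
  calc ‖𝓕 f w‖ * (2 * π * w) ^ 2 = ‖𝓕 (deriv (deriv f)) w‖ := by
        rw [hderiv, norm_smul, norm_pow]
        simp only [norm_mul, Complex.norm_ofNat, Complex.norm_real, Complex.norm_I, norm_eq_abs,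
          abs_of_pos pi_pos, mul_one, mul_pow, sq_abs]
        ring
    _ ≤ ∫ v, ‖deriv (deriv f) v‖ := VectorFourier.norm_fourierIntegral_le_integral_norm _ _ _ _ _

theorem norm_fourier_mul_one_add_sq_le {f : ℝ → E} (hf : ContDiff ℝ 2 f)
    (hfc : HasCompactSupport f) (w : ℝ) :
    ‖𝓕 f w‖ * (1 + (2 * π * w) ^ 2) ≤ (∫ v, ‖f v‖) + ∫ v, ‖deriv (deriv f) v‖ := by
  rw [mul_one_add]
  exact add_le_add (VectorFourier.norm_fourierIntegral_le_integral_norm _ _ _ _ _)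
    (norm_fourier_mul_sq_le_integral_norm_deriv_deriv hf hfc w)

end FourierDecay

theorem freqWindow_eq_mul_fourier {h : ℝ → ℝ}
    (hsupp : ∀ s, s ∉ Set.Icc (-(1/2) : ℝ) (1/2) → h s = 0) {lam : ℝ} (hlam : 0 < lam) (u : ℝ) :
    freqWindow h lam u = lam * 𝓕 (fun t ↦ (h t : ℂ)) (lam * u / (2 * π)) := by
  set g : ℝ → ℂ := fun t ↦ (h t : ℂ) * Complex.exp (-(Complex.I * ↑(lam * t) * u))
  have hg : (∫ t in (-(1/2) : ℝ)..(1/2), g t) = ∫ t, g t := by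
    rw [intervalIntegral.integral_of_le (by norm_num), ← integral_Icc_eq_integral_Ioc,
      setIntegral_eq_integral_of_forall_compl_eq_zero fun t ht ↦ by simp [g, hsupp t ht]]
  calc freqWindow h lam u = ∫ s in (-(lam / 2))..(lam / 2), g (s / lam) := by
        refine intervalIntegral.integral_congr fun s _ ↦ ?_
        simp only [g, mul_div_cancel₀ s hlam.ne']
    _ = lam * ∫ t, g t := by
        have h_lo : -(lam / 2) / lam = -(1 / 2) := by field_simp
        have h_hi : lam / 2 / lam = 1 / 2 := by field_simp
        rw [intervalIntegral.integral_comp_div g hlam.ne', h_lo, h_hi, hg, Complex.real_smul]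
    _ = lam * 𝓕 (fun t ↦ (h t : ℂ)) (lam * u / (2 * π)) := by
        rw [Real.fourier_real_eq_integral_exp_smul]
        congr 2 with t
        simp only [g, smul_eq_mul, mul_comm (Complex.exp _)]
        congr 2
        push_cast
        field_simp

theorem exists_norm_freqWindow_mul_one_add_sq_le {h : ℝ → ℝ}
    (hsupp : ∀ s, s ∉ Set.Icc (-(1/2) : ℝ) (1/2) → h s = 0) (hsm : ContDiff ℝ 2 h) :
    ∃ K, ∀ lam, 0 < lam → ∀ u, ‖freqWindow h lam u‖ * (1 + (lam * u) ^ 2) ≤ lam * K := by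
  set hC : ℝ → ℂ := fun t ↦ (h t : ℂ)
  have hCsm : ContDiff ℝ 2 hC := Complex.ofRealCLM.contDiff.comp hsm
  have hCc : HasCompactSupport hC :=
    HasCompactSupport.intro (isCompact_Icc (a := -(1/2)) (b := 1/2)) fun t ht ↦ by
      simp [hC, hsupp t ht]
  refine ⟨(∫ v, ‖hC v‖) + ∫ v, ‖deriv (deriv hC) v‖, fun lam hlam u ↦ ?_⟩
  have hdecay := norm_fourier_mul_one_add_sq_le hCsm hCc (lam * u / (2 * π))
  rw [show 2 * π * (lam * u / (2 * π)) = lam * u by field_simp] at hdecay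
  rw [freqWindow_eq_mul_fourier hsupp hlam, norm_mul, Complex.norm_real,
    norm_of_nonneg hlam.le, mul_assoc]
  exact mul_le_mul_of_nonneg_left hdecay hlam.le

section WeightedConvolution

variable {R : Type*} [NormedRing R] {B : ℝ → R} {lam K : ℝ}

theorem integral_mul_inv_one_add_sq_mul_sub (hlam : 0 < lam) (ω : ℝ) :
    ∫ u, lam * (1 + (lam * (ω - u)) ^ 2)⁻¹ = π := by
  rw [integral_sub_left_eq_self (fun v ↦ lam * (1 + (lam * v) ^ 2)⁻¹) volume ω,
    integral_const_mul, Measure.integral_comp_mul_left (fun v ↦ (1 + v ^ 2)⁻¹),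
    integral_univ_inv_one_add_sq, smul_eq_mul, abs_inv, abs_of_pos hlam]
  field_simp

theorem integrable_mul_inv_one_add_sq_mul_sub (hlam : 0 < lam) (ω : ℝ) :
    Integrable fun u ↦ lam * (1 + (lam * (ω - u)) ^ 2)⁻¹ :=
  ((integrable_inv_one_add_sq.comp_mul_left' hlam.ne').const_mul lam).comp_sub_left ω

variable (hlam : 0 < lam) (hB : ∀ u, ‖B u‖ * (1 + (lam * u) ^ 2) ≤ lam * K)
include hlam hB

theorem integral_norm_mul_comp_sub_mul_le {w : ℝ → ℝ} {L : ℝ} (hw : ∀ u, 0 ≤ w u)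
    (hBw : ∀ u, ‖B u‖ * w u ≤ L) (ω : ℝ) :
    ∫ u, ‖B u * B (ω - u)‖ * w u ≤ L * K * π := by
  have hL : 0 ≤ L := (mul_nonneg (norm_nonneg _) (hw 0)).trans (hBw 0)
  have hmaj : ∀ v, ‖B v‖ ≤ K * (lam * (1 + (lam * v) ^ 2)⁻¹) := fun v ↦
    ((le_div_iff₀ (by positivity)).2 (hB v)).trans_eq (by ring)
  calc ∫ u, ‖B u * B (ω - u)‖ * w u
      ≤ ∫ u, L * K * (lam * (1 + (lam * (ω - u)) ^ 2)⁻¹) := by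
        refine integral_mono_of_nonneg (ae_of_all _ fun u ↦ mul_nonneg (norm_nonneg _) (hw u))
          ((integrable_mul_inv_one_add_sq_mul_sub hlam ω).const_mul _) (ae_of_all _ fun u ↦ ?_)
        calc ‖B u * B (ω - u)‖ * w u ≤ ‖B u‖ * w u * ‖B (ω - u)‖ := by
              rw [mul_right_comm]
              exact mul_le_mul_of_nonneg_right (norm_mul_le _ _) (hw u)
          _ ≤ L * (K * (lam * (1 + (lam * (ω - u)) ^ 2)⁻¹)) :=
              mul_le_mul (hBw u) (hmaj _) (norm_nonneg _) hL
          _ = _ := by ring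
    _ = L * K * π := by rw [integral_const_mul, integral_mul_inv_one_add_sq_mul_sub hlam]

theorem norm_mul_abs_le_of_norm_mul_one_add_sq_le (u : ℝ) : ‖B u‖ * |u| ≤ K / 2 := by
  have hu : 2 * lam * |u| ≤ 1 + (lam * u) ^ 2 := by
    have hsq : (lam * u) ^ 2 = (lam * |u|) ^ 2 := by rw [mul_pow, mul_pow, sq_abs]
    nlinarith [sq_nonneg (lam * |u| - 1)]
  rw [le_div_iff₀ two_pos, ← mul_le_mul_iff_of_pos_left hlam]
  calc lam * (‖B u‖ * |u| * 2) = ‖B u‖ * (2 * lam * |u|) := by ring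
    _ ≤ ‖B u‖ * (1 + (lam * u) ^ 2) := by gcongr
    _ ≤ lam * K := hB u

theorem norm_mul_sq_le_of_norm_mul_one_add_sq_le (u : ℝ) : ‖B u‖ * u ^ 2 ≤ K / lam := by
  rw [le_div_iff₀ hlam, ← mul_le_mul_iff_of_pos_left hlam]
  calc lam * (‖B u‖ * u ^ 2 * lam) ≤ ‖B u‖ * (1 + (lam * u) ^ 2) := by
        nlinarith [norm_nonneg (B u)]
    _ ≤ lam * K := hB u

end WeightedConvolution

theorem freqWindow_abs_weighted_convolution_bound_general (h : ℝ → ℝ)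
    (hsupp : ∀ s, s ∉ Set.Icc (-(1/2) : ℝ) (1/2) → h s = 0)
    (hsm : ContDiff ℝ 2 h) :
    ∃ C : ℝ, 0 < C ∧ ∀ lam : ℝ, 0 < lam → ∀ m : ℤ,
      (∫ u : ℝ, ‖freqWindow h lam u * freqWindow h lam (2 * Real.pi * m / lam - u)‖ * |u|)
        ≤ C ∧
      (∫ u : ℝ, ‖freqWindow h lam u * freqWindow h lam (2 * Real.pi * m / lam - u)‖ * u ^ 2)
        ≤ C / lam := by
  obtain ⟨K, hK⟩ := exists_norm_freqWindow_mul_one_add_sq_le hsupp hsm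
  refine ⟨π * K ^ 2 + 1, by positivity, fun lam hlam m ↦ ⟨?_, ?_⟩⟩
  · calc _ ≤ K / 2 * K * π := integral_norm_mul_comp_sub_mul_le hlam (hK lam hlam)
          (fun u ↦ abs_nonneg u) (norm_mul_abs_le_of_norm_mul_one_add_sq_le hlam (hK lam hlam)) _
      _ ≤ π * K ^ 2 + 1 := by nlinarith [pi_pos, sq_nonneg K]
  · calc _ ≤ K / lam * K * π := integral_norm_mul_comp_sub_mul_le hlam (hK lam hlam)
          (fun u ↦ sq_nonneg u) (norm_mul_sq_le_of_norm_mul_one_add_sq_le hlam (hK lam hlam)) _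
      _ = π * K ^ 2 / lam := by ring
      _ ≤ (π * K ^ 2 + 1) / lam := by gcongr; linarith

/-- Under the smoothness assumptions on the taper `h` (nonnegative, symmetric, supported on
`[−1/2,1/2]`, twice differentiable on `ℝ`), there is a constant `C` such that for all `λ > 0`
and all `m ∈ ℤ`, `∫_ℝ |B_λ(u) B_λ(ω_m − u) · u| du ≤ C` and
`∫_ℝ |B_λ(u) B_λ(ω_m − u) · u²| du ≤ C/λ`, where `ω_m = 2πm/λ`. -/
theorem freqWindow_abs_weighted_convolution_bound (h : ℝ → ℝ)
    (hnn : ∀ s, 0 ≤ h s)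
    (hsym : ∀ s, h (-s) = h s)
    (hsupp : ∀ s, s ∉ Set.Icc (-(1/2) : ℝ) (1/2) → h s = 0)
    (hsm : ContDiff ℝ 2 h) :
    ∃ C : ℝ, 0 < C ∧ ∀ lam : ℝ, 0 < lam → ∀ m : ℤ,
      (∫ u : ℝ, ‖freqWindow h lam u * freqWindow h lam (2 * Real.pi * m / lam - u)‖ * |u|)
        ≤ C ∧
      (∫ u : ℝ, ‖freqWindow h lam u * freqWindow h lam (2 * Real.pi * m / lam - u)‖ * u ^ 2)
        ≤ C / lam :=
  freqWindow_abs_weighted_convolution_bound_general h hsupp hsm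
end

section
/- Let f: ℝ → ℝ be twice differentiable with |f|, |f'|, |f''| all bounded by β_{1+δ} for some δ > 0. Then uniformly over u, v ∈ ℝ and a ∈ ℕ, the midpoint Riemann sum error satisfies |(2π/λ) ∑_{k=−a}^{a−1} f(ω̃_k − u) f(ω̃_k − v) − ∫_{−2πa/λ}^{2πa/λ} f(ω−u) f(ω−v) dω| ≤ C/λ², where ω̃_k = 2πk/λ + π/λ are the shifted (midpoint) Fourier frequencies. -/
open MeasureTheory Real

/-- `β_δ(ω) = C` for `|ω| ≤ 1` and `C·|ω|^{−δ}` for `|ω| > 1`. -/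
noncomputable def betaFun (C δ : ℝ) (ω : ℝ) : ℝ :=
  if |ω| ≤ 1 then C else C * |ω| ^ (-δ)

/-!
On a cell of width `h`, comparing `g` with its tangent line at the midpoint `m` gives
`|h g(m) - ∫ g| ≤ h²/2 · ∫_cell |g''|`: the linear term integrates to zero, and by the mean value
inequality the remainder is at most `|t - m|` times the total variation of `g'` on the cell.
Summing over the `2a` cells of width `2π/λ` bounds the error by `(2π/λ)²/2 · ∫ |g''|` for
`g(ω) = f(ω - u) f(ω - v)`, and `|g''| ≤ 4C β_{1+δ}(· - u)`, whose integral is finite and does not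
depend on `u`, `v` or `a`.
-/

open Set Finset

theorem betaFun_eq_mul_max_rpow (C s x : ℝ) : betaFun C s x = C * max 1 |x| ^ (-s) := by
  unfold betaFun
  split_ifs with hx
  · simp [max_eq_left hx]
  · rw [max_eq_right (not_le.1 hx).le]

theorem betaFun_le {C s : ℝ} (hC : 0 ≤ C) (hs : 0 ≤ s) (x : ℝ) : betaFun C s x ≤ C := by
  rw [betaFun_eq_mul_max_rpow]
  exact mul_le_of_le_one_right hC
    (Real.rpow_le_one_of_one_le_of_nonpos (le_max_left _ _) (neg_nonpos.2 hs))

theorem integrable_max_one_abs_rpow_neg {s : ℝ} (hs : 1 < s) :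
    Integrable fun x : ℝ => max 1 |x| ^ (-s) := by
  have hcont : Continuous fun x : ℝ => max 1 |x| ^ (-s) :=
    (continuous_const.max continuous_abs).rpow_const fun x => Or.inl (by positivity)
  refine ((integrable_one_add_norm (E := ℝ) (r := s) (by simpa using hs)).const_mul (2 ^ s)).mono'
    hcont.aestronglyMeasurable (ae_of_all _ fun x => ?_)
  have hmax : (1 + |x|) * 2⁻¹ ≤ max 1 |x| := by
    cases le_total 1 |x| <;> simp [*] <;> linarith
  calc ‖max 1 |x| ^ (-s)‖ = max 1 |x| ^ (-s) := Real.norm_of_nonneg (by positivity)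
    _ ≤ ((1 + |x|) * 2⁻¹) ^ (-s) := Real.rpow_le_rpow_of_nonpos (by positivity) hmax (by linarith)
    _ = 2 ^ s * (1 + ‖x‖) ^ (-s) := by
      rw [Real.mul_rpow (by positivity) (by positivity), Real.inv_rpow zero_le_two,
        Real.rpow_neg zero_le_two, inv_inv, Real.norm_eq_abs, mul_comm]

theorem integrable_betaFun (C : ℝ) {s : ℝ} (hs : 1 < s) : Integrable (betaFun C s) := by
  rw [show betaFun C s = _ from funext (betaFun_eq_mul_max_rpow C s)]
  exact (integrable_max_one_abs_rpow_neg hs).const_mul C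

theorem Finset.sum_Icc_neg_eq_sum_range {M : Type*} [AddCommMonoid M] (F : ℤ → M) (a : ℕ) :
    ∑ k ∈ Icc (-(a : ℤ)) (a - 1), F k = ∑ j ∈ range (2 * a), F (j - a) := by
  rw [Int.Icc_eq_finset_map, sum_map, show ((a : ℤ) - 1 + 1 - -a).toNat = 2 * a by omega]
  exact sum_congr rfl fun j _ => by simp [sub_eq_neg_add]

section MidpointRule

variable {g g' g'' : ℝ → ℝ}

theorem abs_sub_le_integral_abs_of_hasDerivAt {a b s t : ℝ}
    (hderiv : ∀ r ∈ Icc a b, HasDerivAt g' (g'' r) r)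
    (hint : IntervalIntegrable g'' volume a b) (hs : s ∈ Icc a b) (ht : t ∈ Icc a b) :
    |g' t - g' s| ≤ ∫ r in a..b, |g'' r| := by
  wlog hst : s ≤ t generalizing s t
  · rw [abs_sub_comm]
    exact this ht hs (le_of_not_ge hst)
  have hsub : uIcc s t ⊆ Icc a b := by
    rw [uIcc_of_le hst]
    exact Icc_subset_Icc hs.1 ht.2
  have hint_st : IntervalIntegrable g'' volume s t :=
    hint.mono_set (by rwa [uIcc_of_le (hs.1.trans hs.2)])
  rw [← intervalIntegral.integral_eq_sub_of_hasDerivAt (fun r hr => hderiv r (hsub hr)) hint_st]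
  calc |∫ r in s..t, g'' r| ≤ ∫ r in s..t, |g'' r| :=
        intervalIntegral.abs_integral_le_integral_abs hst
    _ ≤ ∫ r in a..b, |g'' r| :=
        intervalIntegral.integral_mono_interval hs.1 hst ht.2
          (ae_of_all _ fun r => abs_nonneg _) hint.abs

theorem abs_mul_midpoint_sub_integral_le {x h : ℝ} (hh : 0 ≤ h)
    (hg : ∀ t ∈ Icc x (x + h), HasDerivAt g (g' t) t)
    (hg' : ∀ t ∈ Icc x (x + h), HasDerivAt g' (g'' t) t)
    (hint : IntervalIntegrable g'' volume x (x + h)) :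
    |h * g (x + h / 2) - ∫ t in x..x + h, g t| ≤ h ^ 2 / 2 * ∫ t in x..x + h, |g'' t| := by
  set m := x + h / 2 with hm_def
  set V := ∫ t in x..x + h, |g'' t|
  have hm : m ∈ Icc x (x + h) := ⟨by linarith [hm_def], by linarith [hm_def]⟩
  have hV : 0 ≤ V := intervalIntegral.integral_nonneg (by linarith) fun t _ => abs_nonneg _
  have htaylor : ∀ t ∈ Icc x (x + h), |g m + g' m * (t - m) - g t| ≤ V * |t - m| := by
    intro t ht
    have hφ : ∀ s ∈ Icc x (x + h), HasDerivWithinAt (fun r => g r - g' m * r) (g' s - g' m)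
        (Icc x (x + h)) s := fun s hs =>
      ((hg s hs).sub ((hasDerivAt_id s).const_mul (g' m))).hasDerivWithinAt.congr_deriv (by simp)
    have := (convex_Icc x (x + h)).norm_image_sub_le_of_norm_hasDerivWithin_le hφ
      (fun s hs => abs_sub_le_integral_abs_of_hasDerivAt hg' hint hm hs) hm ht
    calc |g m + g' m * (t - m) - g t| = ‖(g t - g' m * t) - (g m - g' m * m)‖ := by
          rw [Real.norm_eq_abs, abs_sub_comm]
          ring_nf
      _ ≤ V * |t - m| := this
  have hgi : IntervalIntegrable g volume x (x + h) :=
    ContinuousOn.intervalIntegrable_of_Icc (by linarith)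
      fun t ht => (hg t ht).continuousAt.continuousWithinAt
  have haffine : ∫ t in x..x + h, (g m + g' m * (t - m)) = h * g m := by
    rw [intervalIntegral.integral_add intervalIntegrable_const
      (Continuous.intervalIntegrable (by fun_prop) _ _), intervalIntegral.integral_const,
      intervalIntegral.integral_const_mul, intervalIntegral.integral_comp_sub_right (fun t => t),
      integral_id, hm_def]
    simp only [smul_eq_mul]
    ring
  calc |h * g m - ∫ t in x..x + h, g t|
      = ‖∫ t in x..x + h, (g m + g' m * (t - m) - g t)‖ := by
        rw [intervalIntegral.integral_sub (Continuous.intervalIntegrable (by fun_prop) _ _) hgi,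
          haffine, Real.norm_eq_abs]
    _ ≤ V * (h / 2) * |x + h - x| := by
        refine intervalIntegral.norm_integral_le_of_norm_le_const fun t ht => ?_
        rw [uIoc_of_le (by linarith)] at ht
        have hdist : |t - m| ≤ h / 2 :=
          abs_le.2 ⟨by linarith [ht.1, hm_def], by linarith [ht.2, hm_def]⟩
        exact (htaylor t (Ioc_subset_Icc_self ht)).trans (mul_le_mul_of_nonneg_left hdist hV)
    _ = h ^ 2 / 2 * V := by
        rw [add_sub_cancel_left, abs_of_nonneg hh]
        ring

theorem abs_midpoint_sum_sub_integral_le {x h : ℝ} {N : ℕ} (hh : 0 ≤ h)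
    (hg : ∀ t ∈ Icc x (x + N * h), HasDerivAt g (g' t) t)
    (hg' : ∀ t ∈ Icc x (x + N * h), HasDerivAt g' (g'' t) t)
    (hint : IntervalIntegrable g'' volume x (x + N * h)) :
    |h * ∑ j ∈ range N, g (x + j * h + h / 2) - ∫ t in x..x + N * h, g t| ≤
      h ^ 2 / 2 * ∫ t in x..x + N * h, |g'' t| := by
  have hsub : ∀ j < N, Icc (x + j * h) (x + j * h + h) ⊆ Icc x (x + N * h) := by
    intro j hj
    have hjN : (j : ℝ) + 1 ≤ N := by exact_mod_cast hj
    exact Icc_subset_Icc (by simp; positivity) (by nlinarith)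
  have hsub' : ∀ j < N, uIcc (x + j * h) (x + j * h + h) ⊆ uIcc x (x + N * h) := by
    intro j hj
    rw [Set.uIcc_of_le (by linarith), Set.uIcc_of_le (le_add_of_nonneg_right (by positivity))]
    exact hsub j hj
  have hsplit : ∀ F : ℝ → ℝ, IntervalIntegrable F volume x (x + N * h) →
      ∫ t in x..x + N * h, F t = ∑ j ∈ range N, ∫ t in x + j * h..x + j * h + h, F t := by
    intro F hF
    have := intervalIntegral.sum_integral_adjacent_intervals (a := fun j : ℕ => x + j * h)
      (n := N) fun j hj => by simpa [add_mul, add_assoc] using hF.mono_set (hsub' j hj)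
    simpa [add_mul, add_assoc] using this.symm
  have hgi : IntervalIntegrable g volume x (x + N * h) :=
    ContinuousOn.intervalIntegrable_of_Icc (le_add_of_nonneg_right (by positivity))
      fun t ht => (hg t ht).continuousAt.continuousWithinAt
  rw [hsplit g hgi, hsplit _ hint.abs, mul_sum, mul_sum, ← sum_sub_distrib]
  refine (abs_sum_le_sum_abs _ _).trans (sum_le_sum fun j hj => ?_)
  have hj : j < N := mem_range.1 hj
  exact abs_mul_midpoint_sub_integral_le hh (fun t ht => hg t (hsub j hj ht))
    (fun t ht => hg' t (hsub j hj ht)) (hint.mono_set (hsub' j hj))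

end MidpointRule

section ShiftedProduct

variable {f b : ℝ → ℝ} {M : ℝ}

theorem abs_deriv2_shift_mul_shift_le (hbM : ∀ x, b x ≤ M) (h0 : ∀ x, |f x| ≤ b x)
    (h1 : ∀ x, |deriv f x| ≤ b x) (h2 : ∀ x, |deriv (deriv f) x| ≤ b x) (u v t : ℝ) :
    |deriv (deriv f) (t - u) * f (t - v) + 2 * (deriv f (t - u) * deriv f (t - v)) +
      f (t - u) * deriv (deriv f) (t - v)| ≤ 4 * M * b (t - u) := by
  have hprod : ∀ p q : ℝ, |p| ≤ b (t - u) → |q| ≤ b (t - v) → |p * q| ≤ b (t - u) * M :=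
    fun p q hp hq => by
      rw [abs_mul]
      exact mul_le_mul hp (hq.trans (hbM _)) (abs_nonneg _) ((abs_nonneg _).trans hp)
  have e1 := hprod _ _ (h2 _) (h0 _)
  have e2 := hprod _ _ (h1 _) (h1 _)
  have e3 := hprod _ _ (h0 _) (h2 _)
  have htri := abs_add_le (deriv (deriv f) (t - u) * f (t - v) +
    2 * (deriv f (t - u) * deriv f (t - v))) (f (t - u) * deriv (deriv f) (t - v))
  have htri' := abs_add_le (deriv (deriv f) (t - u) * f (t - v))
    (2 * (deriv f (t - u) * deriv f (t - v)))
  rw [abs_mul 2, abs_two] at htri'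
  linarith

theorem abs_midpoint_sum_shift_mul_sub_integral_le (hf : Differentiable ℝ f)
    (hf' : Differentiable ℝ (deriv f)) (hb : Integrable b) (hbM : ∀ x, b x ≤ M)
    (h0 : ∀ x, |f x| ≤ b x) (h1 : ∀ x, |deriv f x| ≤ b x) (h2 : ∀ x, |deriv (deriv f) x| ≤ b x)
    (u v x : ℝ) {h : ℝ} (hh : 0 ≤ h) (N : ℕ) :
    |h * ∑ j ∈ range N, f (x + j * h + h / 2 - u) * f (x + j * h + h / 2 - v) -
        ∫ t in x..x + N * h, f (t - u) * f (t - v)| ≤ h ^ 2 / 2 * (4 * M * ∫ y, b y) := by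
  set g'' : ℝ → ℝ := fun t => deriv (deriv f) (t - u) * f (t - v) +
    2 * (deriv f (t - u) * deriv f (t - v)) + f (t - u) * deriv (deriv f) (t - v)
  have hshift : ∀ F : ℝ → ℝ, Differentiable ℝ F → ∀ c t : ℝ,
      HasDerivAt (fun t => F (t - c)) (deriv F (t - c)) t :=
    fun F hF c t => (hF (t - c)).hasDerivAt.comp_sub_const t c
  have hg : ∀ t, HasDerivAt (fun t => f (t - u) * f (t - v))
      (deriv f (t - u) * f (t - v) + f (t - u) * deriv f (t - v)) t :=
    fun t => (hshift f hf u t).mul (hshift f hf v t)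
  have hg' : ∀ t, HasDerivAt (fun t => deriv f (t - u) * f (t - v) + f (t - u) * deriv f (t - v))
      (g'' t) t := fun t =>
    (((hshift _ hf' u t).mul (hshift f hf v t)).add
      ((hshift f hf u t).mul (hshift _ hf' v t))).congr_deriv (by ring)
  have hbound := abs_deriv2_shift_mul_shift_le hbM h0 h1 h2 u v
  have hint : Integrable g'' := by
    refine ((hb.comp_sub_right u).const_mul (4 * M)).mono' ?_ (ae_of_all _ hbound)
    have := measurable_deriv (deriv f)
    have := hf.continuous.measurable
    have := hf'.continuous.measurable
    fun_prop
  calc _ ≤ h ^ 2 / 2 * ∫ t in x..x + N * h, |g'' t| :=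
        abs_midpoint_sum_sub_integral_le hh (fun t _ => hg t) (fun t _ => hg' t)
          hint.intervalIntegrable
    _ ≤ h ^ 2 / 2 * ∫ t, |g'' t| := by
        gcongr
        rw [intervalIntegral.integral_of_le (le_add_of_nonneg_right (by positivity))]
        exact setIntegral_le_integral hint.abs (ae_of_all _ fun t => abs_nonneg _)
    _ ≤ h ^ 2 / 2 * (4 * M * ∫ y, b y) := by
        gcongr
        calc ∫ t, |g'' t| ≤ ∫ t, 4 * M * b (t - u) :=
              integral_mono hint.abs ((hb.comp_sub_right u).const_mul _) hbound
          _ = 4 * M * ∫ y, b y := by rw [integral_const_mul, integral_sub_right_eq_self]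

end ShiftedProduct

theorem midpoint_riemann_sum_error_general (C δ : ℝ) (hδ : 0 < δ)
    (f : ℝ → ℝ)
    (hdiff : Differentiable ℝ f) (hdiff2 : Differentiable ℝ (deriv f))
    (hf : ∀ x, |f x| ≤ betaFun C (1 + δ) x)
    (hf' : ∀ x, |deriv f x| ≤ betaFun C (1 + δ) x)
    (hf'' : ∀ x, |deriv (deriv f) x| ≤ betaFun C (1 + δ) x) :
    ∃ K : ℝ, 0 < K ∧ ∀ (a : ℕ) (lam : ℝ), 1 ≤ lam → ∀ u v : ℝ,
      |(2 * Real.pi / lam) *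
          ∑ k ∈ Finset.Icc (-(a : ℤ)) ((a : ℤ) - 1),
            f ((2 * Real.pi * k / lam + Real.pi / lam) - u) *
              f ((2 * Real.pi * k / lam + Real.pi / lam) - v) -
        ∫ ω in (-(2 * Real.pi * a / lam))..(2 * Real.pi * a / lam),
          f (ω - u) * f (ω - v)| ≤ K / lam ^ 2 := by
  have hC : 0 ≤ C := (abs_nonneg _).trans (by simpa [betaFun] using hf 0)
  set B := ∫ x, betaFun C (1 + δ) x with hB_def
  have hB : 0 ≤ B := integral_nonneg fun x => (abs_nonneg _).trans (hf x)
  refine ⟨8 * π ^ 2 * C * B + 1, by positivity, fun a lam hlam₁ u v => ?_⟩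
  have hlam : 0 < lam := by linarith
  have hmid := abs_midpoint_sum_shift_mul_sub_integral_le hdiff hdiff2
    (integrable_betaFun C (by linarith)) (betaFun_le hC (by linarith)) hf hf' hf'' u v
    (-(2 * π * a / lam)) (h := 2 * π / lam) (by positivity) (2 * a)
  have hmidpoints : ∀ j : ℕ, 2 * π * ((j - a : ℤ) : ℝ) / lam + π / lam =
      -(2 * π * a / lam) + j * (2 * π / lam) + 2 * π / lam / 2 := fun j => by push_cast; ring
  have hend : -(2 * π * a / lam) + ((2 * a : ℕ) : ℝ) * (2 * π / lam) = 2 * π * a / lam := by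
    push_cast; ring
  rw [hend, ← hB_def] at hmid
  rw [sum_Icc_neg_eq_sum_range]
  simp only [hmidpoints]
  calc _ ≤ _ := hmid
    _ = 8 * π ^ 2 * C * B / lam ^ 2 := by ring
    _ ≤ _ := by gcongr; linarith

/-- Let `f : ℝ → ℝ` be twice differentiable with `|f|, |f'|, |f''| ≤ β_{1+δ}` for some `δ > 0`.
Then, uniformly over `u, v ∈ ℝ` and `a ∈ ℕ`, the midpoint Riemann sum over the shifted Fourier
frequencies `ω̃_k = 2πk/λ + π/λ` approximates the integral with error `≤ K/λ²`:
`|(2π/λ) ∑_{k=−a}^{a−1} f(ω̃_k−u) f(ω̃_k−v) − ∫_{−2πa/λ}^{2πa/λ} f(ω−u) f(ω−v) dω| ≤ K/λ²`. -/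
theorem midpoint_riemann_sum_error (C δ : ℝ) (hC : 0 < C) (hδ : 0 < δ)
    (f : ℝ → ℝ)
    (hdiff : Differentiable ℝ f) (hdiff2 : Differentiable ℝ (deriv f))
    (hf : ∀ x, |f x| ≤ betaFun C (1 + δ) x)
    (hf' : ∀ x, |deriv f x| ≤ betaFun C (1 + δ) x)
    (hf'' : ∀ x, |deriv (deriv f) x| ≤ betaFun C (1 + δ) x) :
    ∃ K : ℝ, 0 < K ∧ ∀ (a : ℕ) (lam : ℝ), 1 ≤ lam → ∀ u v : ℝ,
      |(2 * Real.pi / lam) *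
          ∑ k ∈ Finset.Icc (-(a : ℤ)) ((a : ℤ) - 1),
            f ((2 * Real.pi * k / lam + Real.pi / lam) - u) *
              f ((2 * Real.pi * k / lam + Real.pi / lam) - v) -
        ∫ ω in (-(2 * Real.pi * a / lam))..(2 * Real.pi * a / lam),
          f (ω - u) * f (ω - v)| ≤ K / lam ^ 2 :=
  midpoint_riemann_sum_error_general C δ hδ f hdiff hdiff2 hf hf' hf''
end

section
/- Let h: ℝ → ℝ satisfy the smooth taper conditions (symmetric, support [−1/2,1/2], twice differentiable) and let f: ℝ → ℝ be positive, bounded, with ∫ f³ < ∞ and bounded derivative. Then there is a constant such that for all a ∈ ℕ and λ sufficiently large, ∑_{m=−2a+1}^{2a−1} H(m)² ∫_{−2πa/λ}^{2πa/λ} f³(x)|f(ω_m + x) − f(x)| dx ≲ (log λ)²/λ + 1/(log λ)³, and in particular this quantity is O(1/(log λ)³) as λ → ∞. -/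
/-!
Two integrations by parts, legitimate because `h²` and `(h²)' = 2hh'` vanish at `±1/2`,
give `|H(m)| ≤ C / m²`. By the mean value theorem the increment integral at frequency `ω`
is at most `‖f'‖∞ |ω| ∫ f³`, and it is always at most `‖f‖∞ ∫ f³`. Splitting the sum at
`|m| = ⌊log λ⌋`, the first bound controls the at most `3 log λ` small frequencies and the
second, together with `∑_{|m| > M} m⁻⁴ ≤ 2 / M³`, the tail. Finally `(log λ)⁵ ≤ 5⁵ λ`
absorbs `(log λ)² / λ` into `1 / (log λ)³`.
-/

open MeasureTheory Real

section CosineCoefficients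

open Set

theorem integral_mul_cos_eq_neg_div_sq {g g' g'' : ℝ → ℝ} {a b ω : ℝ} (hω : ω ≠ 0)
    (hg : ∀ x ∈ uIcc a b, HasDerivAt g (g' x) x)
    (hg' : ∀ x ∈ uIcc a b, HasDerivAt g' (g'' x) x)
    (hg'' : IntervalIntegrable g'' volume a b)
    (ha : g a = 0) (hb : g b = 0) (ha' : g' a = 0) (hb' : g' b = 0) :
    ∫ s in a..b, g s * cos (ω * s) = -(∫ s in a..b, g'' s * cos (ω * s)) / ω ^ 2 := by
  have hlin (x : ℝ) : HasDerivAt (fun s => ω * s) ω x := by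
    simpa using (hasDerivAt_id x).const_mul ω
  have hsin (x : ℝ) : HasDerivAt (fun s => sin (ω * s) / ω) (cos (ω * x)) x :=
    ((hlin x).sin.div_const ω).congr_deriv (by field_simp)
  have hcos (x : ℝ) : HasDerivAt (fun s => -cos (ω * s) / ω ^ 2) (sin (ω * x) / ω) x :=
    ((hlin x).cos.neg.div_const (ω ^ 2)).congr_deriv (by field_simp)
  have hg'i : IntervalIntegrable g' volume a b :=
    ContinuousOn.intervalIntegrable fun x hx => (hg' x hx).continuousAt.continuousWithinAt
  have hcosi : IntervalIntegrable (fun s => cos (ω * s)) volume a b := by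
    apply Continuous.intervalIntegrable; fun_prop
  have hsini : IntervalIntegrable (fun s => sin (ω * s) / ω) volume a b := by
    apply Continuous.intervalIntegrable; fun_prop
  rw [intervalIntegral.integral_mul_deriv_eq_deriv_mul hg (fun x _ => hsin x) hg'i hcosi,
    intervalIntegral.integral_mul_deriv_eq_deriv_mul hg' (fun x _ => hcos x) hg'' hsini,
    ha, hb, ha', hb']
  simp only [mul_div_assoc', intervalIntegral.integral_div, mul_neg, intervalIntegral.integral_neg]
  ring

theorem abs_integral_mul_cos_le {u : ℝ → ℝ} {a b C : ℝ}
    (hC : ∀ s ∈ uIcc a b, |u s| ≤ C) (ω : ℝ) :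
    |∫ s in a..b, u s * cos (ω * s)| ≤ C * |b - a| := by
  refine intervalIntegral.norm_integral_le_of_norm_le_const (E := ℝ) fun s hs => ?_
  have hus := hC s (uIoc_subset_uIcc hs)
  simpa using mul_le_mul hus (abs_cos_le_one (ω * s)) (abs_nonneg _) ((abs_nonneg _).trans hus)

theorem abs_integral_mul_cos_le_div_sq {g g' g'' : ℝ → ℝ} {a b ω C : ℝ} (hω : ω ≠ 0)
    (hg : ∀ x ∈ uIcc a b, HasDerivAt g (g' x) x)
    (hg' : ∀ x ∈ uIcc a b, HasDerivAt g' (g'' x) x)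
    (hg'' : IntervalIntegrable g'' volume a b)
    (ha : g a = 0) (hb : g b = 0) (ha' : g' a = 0) (hb' : g' b = 0)
    (hC : ∀ s ∈ uIcc a b, |g'' s| ≤ C) :
    |∫ s in a..b, g s * cos (ω * s)| ≤ C * |b - a| / ω ^ 2 := by
  rw [integral_mul_cos_eq_neg_div_sq hω hg hg' hg'' ha hb ha' hb', abs_div, abs_neg,
    abs_of_nonneg (sq_nonneg ω)]
  gcongr
  exact abs_integral_mul_cos_le hC ω

theorem eq_zero_of_forall_notMem_Icc {h : ℝ → ℝ} (hc : Continuous h) {a b : ℝ}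
    (hsupp : ∀ s ∉ Icc a b, h s = 0) : h a = 0 ∧ h b = 0 := by
  have hclosed : IsClosed {s | h s = 0} := isClosed_eq hc continuous_const
  constructor
  · have : closure (Iio a) ⊆ {s | h s = 0} :=
      hclosed.closure_subset_iff.mpr fun s hs => hsupp s fun hs' => (not_le.mpr hs) hs'.1
    exact this (by rw [closure_Iio]; exact mem_Iic.mpr le_rfl)
  · have : closure (Ioi b) ⊆ {s | h s = 0} :=
      hclosed.closure_subset_iff.mpr fun s hs => hsupp s fun hs' => (not_le.mpr hs) hs'.2
    exact this (by rw [closure_Ioi]; exact mem_Ici.mpr le_rfl)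

theorem exists_bound_integral_sq_mul_cos {h : ℝ → ℝ} {a b : ℝ}
    (hsupp : ∀ s ∉ Icc a b, h s = 0) (hh : ContDiff ℝ 2 h) :
    ∃ C, ∀ ω : ℝ, |∫ s in a..b, h s ^ 2 * cos (ω * s)| ≤ C ∧
      (ω ≠ 0 → |∫ s in a..b, h s ^ 2 * cos (ω * s)| ≤ C / ω ^ 2) := by
  have hh' : ContDiff ℝ 1 (deriv h) := hh.deriv'
  have hd : ∀ x, HasDerivAt h (deriv h x) x := fun x =>
    (hh.differentiable (by norm_num) x).hasDerivAt
  have hd' : ∀ x, HasDerivAt (deriv h) (deriv (deriv h) x) x := fun x =>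
    (hh'.differentiable one_ne_zero x).hasDerivAt
  set g'' := fun s => 2 * (deriv h s ^ 2 + h s * deriv (deriv h) s)
  have hg : ∀ x, HasDerivAt (fun s => h s ^ 2) (2 * h x * deriv h x) x := fun x =>
    ((hd x).pow 2).congr_deriv (by ring)
  have hg' : ∀ x, HasDerivAt (fun s => 2 * h s * deriv h s) (g'' x) x := fun x =>
    (((hd x).const_mul 2).mul (hd' x)).congr_deriv (by ring)
  have hg''c : Continuous g'' := by
    have := hh.continuous; have := hh'.continuous; have := hh'.continuous_deriv le_rfl
    fun_prop
  obtain ⟨C₀, hC₀⟩ := (isCompact_uIcc (a := a) (b := b)).exists_bound_of_continuousOn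
    (hh.continuous.pow 2).continuousOn
  obtain ⟨C₂, hC₂⟩ := (isCompact_uIcc (a := a) (b := b)).exists_bound_of_continuousOn
    hg''c.continuousOn
  obtain ⟨ha, hb⟩ := eq_zero_of_forall_notMem_Icc hh.continuous hsupp
  refine ⟨max C₀ C₂ * |b - a|, fun ω => ⟨?_, fun hω => ?_⟩⟩
  · exact abs_integral_mul_cos_le (fun s hs => (hC₀ s hs).trans (le_max_left _ _)) ω
  · refine (abs_integral_mul_cos_le_div_sq hω (fun x _ => hg x) (fun x _ => hg' x)
      (hg''c.intervalIntegrable _ _) ?_ ?_ ?_ ?_ fun s hs => (hC₂ s hs).trans (le_max_right _ _))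
      <;> simp [ha, hb]

noncomputable def taperCoeff (h : ℝ → ℝ) (ω : ℝ) : ℝ :=
  ∫ s in (-(1/2) : ℝ)..(1/2), h s ^ 2 * cos (ω * s)

theorem exists_taperCoeff_sq_le {h : ℝ → ℝ}
    (hsupp : ∀ s ∉ Icc (-(1/2) : ℝ) (1/2), h s = 0) (hh : ContDiff ℝ 2 h) :
    ∃ C, 0 ≤ C ∧ ∀ m : ℤ, taperCoeff h (2 * π * m) ^ 2 ≤ C ∧
      (m ≠ 0 → taperCoeff h (2 * π * m) ^ 2 ≤ C * ((m : ℝ) ^ 4)⁻¹) := by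
  obtain ⟨C, hC⟩ := exists_bound_integral_sq_mul_cos hsupp hh
  refine ⟨C ^ 2, sq_nonneg C, fun m => ⟨?_, fun hm => ?_⟩⟩
  · simpa only [sq_abs, taperCoeff] using pow_le_pow_left₀ (abs_nonneg _) (hC (2 * π * m)).1 2
  · have hm' : (m : ℝ) ≠ 0 := Int.cast_ne_zero.mpr hm
    have hπ : 1 ≤ (2 * π) ^ 4 := one_le_pow₀ (by linarith [pi_gt_three])
    calc taperCoeff h (2 * π * m) ^ 2 ≤ (C / (2 * π * m) ^ 2) ^ 2 := by
          simpa only [sq_abs, taperCoeff] using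
            pow_le_pow_left₀ (abs_nonneg _) ((hC (2 * π * m)).2 (by positivity)) 2
      _ = C ^ 2 * ((m : ℝ) ^ 4)⁻¹ / (2 * π) ^ 4 := by field_simp
      _ ≤ C ^ 2 * ((m : ℝ) ^ 4)⁻¹ := div_le_self (by positivity) hπ

end CosineCoefficients

section Increments

theorem intervalIntegral_mul_le_mul_integral {g u : ℝ → ℝ} {a b c : ℝ} (hab : a ≤ b)
    (hg : Integrable g) (hg0 : ∀ x, 0 ≤ g x) (hu : AEStronglyMeasurable u)
    (hu0 : ∀ x, 0 ≤ u x) (huc : ∀ x, u x ≤ c) :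
    ∫ x in a..b, g x * u x ≤ c * ∫ x, g x := by
  have hgu : Integrable fun x => g x * u x :=
    hg.mul_bdd hu (ae_of_all _ fun x => by rw [norm_eq_abs, abs_of_nonneg (hu0 x)]; exact huc x)
  rw [intervalIntegral.integral_of_le hab]
  calc ∫ x in Set.Ioc a b, g x * u x ≤ ∫ x, g x * u x :=
        setIntegral_le_integral hgu (ae_of_all _ fun x => mul_nonneg (hg0 x) (hu0 x))
    _ ≤ ∫ x, g x * c := integral_mono hgu (hg.mul_const c) fun x =>
        mul_le_mul_of_nonneg_left (huc x) (hg0 x)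
    _ = c * ∫ x, g x := by rw [integral_mul_const, mul_comm]

noncomputable def incrementIntegral (f : ℝ → ℝ) (L ω : ℝ) : ℝ :=
  ∫ x in (-L)..L, f x ^ 3 * |f (ω + x) - f x|

variable {f : ℝ → ℝ} {L : ℝ}

theorem incrementIntegral_nonneg (hf : ∀ x, 0 < f x) (hL : 0 ≤ L) (ω : ℝ) :
    0 ≤ incrementIntegral f L ω :=
  intervalIntegral.integral_nonneg (by linarith)
    fun x _ => mul_nonneg (pow_pos (hf x) 3).le (abs_nonneg _)

theorem incrementIntegral_le (hf : ∀ x, 0 < f x) (hfc : Continuous f)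
    (hf3 : Integrable fun x => f x ^ 3) (hL : 0 ≤ L) {ω c : ℝ}
    (hc : ∀ x, |f (ω + x) - f x| ≤ c) :
    incrementIntegral f L ω ≤ c * ∫ x, f x ^ 3 :=
  intervalIntegral_mul_le_mul_integral (by linarith) hf3 (fun x => (pow_pos (hf x) 3).le)
    (by fun_prop) (fun x => abs_nonneg _) hc

theorem incrementIntegral_le_of_abs_deriv_le (hf : ∀ x, 0 < f x) (hfd : Differentiable ℝ f)
    (hf3 : Integrable fun x => f x ^ 3) (hL : 0 ≤ L) {Cd : ℝ} (hCd : ∀ x, |deriv f x| ≤ Cd)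
    (ω : ℝ) : incrementIntegral f L ω ≤ Cd * |ω| * ∫ x, f x ^ 3 :=
  incrementIntegral_le hf hfd.continuous hf3 hL fun x => by
    simpa using convex_univ.norm_image_sub_le_of_norm_deriv_le (fun z _ => hfd z)
      (fun z _ => hCd z) (Set.mem_univ x) (Set.mem_univ (ω + x))

theorem incrementIntegral_le_of_forall_le (hf : ∀ x, 0 < f x) (hfc : Continuous f)
    (hf3 : Integrable fun x => f x ^ 3) (hL : 0 ≤ L) {Cf : ℝ} (hCf : ∀ x, f x ≤ Cf)
    (ω : ℝ) : incrementIntegral f L ω ≤ Cf * ∫ x, f x ^ 3 :=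
  incrementIntegral_le hf hfc hf3 hL fun x =>
    abs_sub_le_of_nonneg_of_le (hf _).le (hCf _) (hf x).le (hCf x)

end Increments

theorem log_sq_div_le {lam : ℝ} (hlam : exp 1 ≤ lam) :
    log lam ^ 2 / lam ≤ 3125 * (1 / log lam ^ 3) := by
  have hlam0 : 0 < lam := (exp_pos 1).trans_le hlam
  have hlog : 0 < log lam := log_pos ((one_lt_exp_iff.mpr one_pos).trans_le hlam)
  have h5 : log lam ^ 5 ≤ 3125 * lam :=
    calc log lam ^ 5 ≤ (lam ^ (1 / 5 : ℝ) / (1 / 5)) ^ 5 :=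
          pow_le_pow_left₀ hlog.le (log_le_rpow_div hlam0.le (by norm_num)) 5
      _ = 3125 * lam := by
          rw [div_pow, ← rpow_natCast (lam ^ _), ← rpow_mul hlam0.le]
          norm_num
          ring
  rw [div_le_iff₀ hlam0, mul_one_div, div_mul_eq_mul_div, le_div_iff₀ (by positivity)]
  linarith

section LogSplitting

open Finset

theorem inv_add_one_pow_four_le {x : ℝ} (hx : 0 < x) :
    ((x + 1) ^ 4)⁻¹ ≤ (x ^ 3)⁻¹ - ((x + 1) ^ 3)⁻¹ := by
  rw [inv_sub_inv (by positivity) (by positivity), le_div_iff₀ (by positivity),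
    inv_mul_le_iff₀ (by positivity)]
  have : 0 ≤ (x + 1) ^ 3 * (2 * x ^ 3 + 6 * x ^ 2 + 4 * x + 1) := by positivity
  nlinarith

theorem sum_Ioc_inv_pow_four_le_sub {k n : ℕ} (hk : k ≠ 0) (h : k ≤ n) :
    ∑ i ∈ Ioc k n, ((i : ℝ) ^ 4)⁻¹ ≤ ((k : ℝ) ^ 3)⁻¹ - ((n : ℝ) ^ 3)⁻¹ := by
  induction n, h using Nat.le_induction with
  | base => simp
  | succ n hn ih =>
    rw [sum_Ioc_succ_top hn]
    have := inv_add_one_pow_four_le (x := n) (by exact_mod_cast hk.bot_lt.trans_le hn)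
    push_cast
    linarith

theorem sum_Ioc_inv_pow_four_le {k : ℕ} (hk : k ≠ 0) (n : ℕ) :
    ∑ i ∈ Ioc k n, ((i : ℝ) ^ 4)⁻¹ ≤ ((k : ℝ) ^ 3)⁻¹ := by
  rcases le_total k n with h | h
  · grw [sum_Ioc_inv_pow_four_le_sub hk h]
    simp
  · simp [Ioc_eq_empty_of_le h]

theorem sum_inv_pow_four_le_of_lt_abs {F : Finset ℤ} {M : ℕ} (hM : M ≠ 0)
    (hF : ∀ m ∈ F, (M : ℤ) < |m|) :
    ∑ m ∈ F, ((m : ℝ) ^ 4)⁻¹ ≤ 2 * ((M : ℝ) ^ 3)⁻¹ := by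
  have hpow (m : ℤ) : (m : ℝ) ^ 4 = ((m.natAbs : ℕ) : ℝ) ^ 4 := by
    rw [Nat.cast_natAbs, Int.cast_abs, (by norm_num : Even 4).pow_abs]
  simp only [hpow]
  rw [sum_comp (fun k : ℕ => ((k : ℝ) ^ 4)⁻¹) Int.natAbs]
  have hfiber (k : ℕ) : #{m ∈ F | m.natAbs = k} ≤ 2 := by
    refine (card_le_card fun m hm => ?_).trans (card_le_two (a := (k : ℤ)) (b := -k))
    simp only [mem_filter] at hm
    simp only [mem_insert, mem_singleton]
    omega
  have hsub : F.image Int.natAbs ⊆ Ioc M ((F.image Int.natAbs).sup id) := fun k hk => by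
    obtain ⟨m, hm, rfl⟩ := mem_image.mp hk
    have := hF m hm
    rw [Int.abs_eq_natAbs] at this
    exact mem_Ioc.mpr ⟨by omega, le_sup (f := id) hk⟩
  calc ∑ k ∈ F.image Int.natAbs, #{m ∈ F | m.natAbs = k} • ((k : ℝ) ^ 4)⁻¹
      ≤ ∑ k ∈ F.image Int.natAbs, 2 * ((k : ℝ) ^ 4)⁻¹ := by
        gcongr with k
        rw [nsmul_eq_mul]
        gcongr
        exact_mod_cast hfiber k
    _ ≤ 2 * ∑ k ∈ Ioc M ((F.image Int.natAbs).sup id), ((k : ℝ) ^ 4)⁻¹ := by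
        rw [← mul_sum]
        exact mul_le_mul_of_nonneg_left
          (sum_le_sum_of_subset_of_nonneg hsub fun _ _ _ => by positivity) zero_le_two
    _ ≤ 2 * ((M : ℝ) ^ 3)⁻¹ := by grw [sum_Ioc_inv_pow_four_le hM]

theorem card_filter_abs_le (F : Finset ℤ) (M : ℕ) :
    (#{m ∈ F | |m| ≤ (M : ℤ)} : ℝ) ≤ 2 * M + 1 := by
  have hsub : {m ∈ F | |m| ≤ (M : ℤ)} ⊆ Icc (-(M : ℤ)) M := fun m hm => by
    simp only [mem_filter] at hm
    exact mem_Icc.mpr (abs_le.mp hm.2)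
  have := card_le_card hsub
  rw [Int.card_Icc] at this
  have : #{m ∈ F | |m| ≤ (M : ℤ)} ≤ 2 * M + 1 := by omega
  exact_mod_cast this

theorem sum_le_of_split_at_log (F : Finset ℤ) (t : ℤ → ℝ) {A B lam : ℝ} (hA : 0 ≤ A)
    (hB : 0 ≤ B) (hlam : exp 1 ≤ lam) (hsmall : ∀ m ∈ F, t m ≤ A * |(m : ℝ)| / lam)
    (hlarge : ∀ m ∈ F, m ≠ 0 → t m ≤ B * ((m : ℝ) ^ 4)⁻¹) :
    ∑ m ∈ F, t m ≤ 3 * A * (log lam ^ 2 / lam) + 16 * B * (1 / log lam ^ 3) := by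
  have hlam0 : 0 < lam := (exp_pos 1).trans_le hlam
  have hlog : 1 ≤ log lam := by rwa [le_log_iff_exp_le hlam0]
  set M := ⌊log lam⌋₊
  have hM : M ≠ 0 := Nat.one_le_iff_ne_zero.mp ((Nat.one_le_floor_iff _).mpr hlog)
  have hMlog : (M : ℝ) ≤ log lam := Nat.floor_le (by linarith)
  have hlogM : log lam ≤ 2 * M := by
    have := Nat.lt_floor_add_one (log lam)
    have : (1 : ℝ) ≤ M := by exact_mod_cast Nat.one_le_iff_ne_zero.mpr hM
    linarith
  rw [← sum_filter_add_sum_filter_not F (fun m => |m| ≤ (M : ℤ))]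
  gcongr ?_ + ?_
  · calc ∑ m ∈ F with |m| ≤ (M : ℤ), t m
        ≤ ∑ m ∈ F with |m| ≤ (M : ℤ), A * M / lam := by
          refine sum_le_sum fun m hm => (hsmall m (mem_filter.mp hm).1).trans ?_
          have : |(m : ℝ)| ≤ M := by exact_mod_cast (mem_filter.mp hm).2
          gcongr
      _ ≤ (2 * M + 1) * (A * M / lam) := by
          rw [sum_const, nsmul_eq_mul]
          gcongr
          exact card_filter_abs_le F M
      _ ≤ 3 * log lam * (A * log lam / lam) := by gcongr; linarith
      _ = 3 * A * (log lam ^ 2 / lam) := by ring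
  · calc ∑ m ∈ F with ¬|m| ≤ (M : ℤ), t m
        ≤ ∑ m ∈ F with ¬|m| ≤ (M : ℤ), B * ((m : ℝ) ^ 4)⁻¹ := by
          refine sum_le_sum fun m hm => hlarge m (mem_filter.mp hm).1 ?_
          rintro rfl
          exact (mem_filter.mp hm).2 (by simp)
      _ ≤ B * (2 * ((M : ℝ) ^ 3)⁻¹) := by
          rw [← mul_sum]
          gcongr
          exact sum_inv_pow_four_le_of_lt_abs hM fun m hm => not_le.mp (mem_filter.mp hm).2
      _ = 16 * B * (1 / (2 * M) ^ 3) := by ring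
      _ ≤ 16 * B * (1 / log lam ^ 3) := by gcongr

end LogSplitting

theorem weighted_increment_sum_bound_general (h : ℝ → ℝ)
    (hsupp : ∀ s, s ∉ Set.Icc (-(1/2) : ℝ) (1/2) → h s = 0)
    (hsm : ContDiff ℝ 2 h)
    (f : ℝ → ℝ) (hfpos : ∀ x, 0 < f x) (hfbdd : ∃ Cf : ℝ, ∀ x, f x ≤ Cf)
    (hf3 : Integrable fun x => f x ^ 3)
    (hfdiff : Differentiable ℝ f) (hfd : ∃ Cd : ℝ, ∀ x, |deriv f x| ≤ Cd) :
    ∃ K Λ : ℝ, 0 < K ∧ 1 < Λ ∧ ∀ lam : ℝ, Λ ≤ lam → ∀ a : ℕ,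
      let S : ℝ := ∑ m ∈ Finset.Icc (-2 * (a : ℤ) + 1) (2 * (a : ℤ) - 1),
        (∫ s in (-(1/2) : ℝ)..(1/2), h s ^ 2 * Real.cos (2 * Real.pi * m * s)) ^ 2 *
          ∫ x in (-(2 * Real.pi * a / lam))..(2 * Real.pi * a / lam),
            f x ^ 3 * |f (2 * Real.pi * m / lam + x) - f x|
      S ≤ K * ((Real.log lam) ^ 2 / lam + 1 / (Real.log lam) ^ 3) ∧
      S ≤ K / (Real.log lam) ^ 3 := by
  obtain ⟨C, hC0, hC⟩ := exists_taperCoeff_sq_le hsupp hsm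
  obtain ⟨Cf, hCf⟩ := hfbdd
  obtain ⟨Cd, hCd⟩ := hfd
  set J := ∫ x, f x ^ 3
  have hJ : 0 ≤ J := integral_nonneg fun x => (pow_pos (hfpos x) 3).le
  set A := C * (Cd * (2 * π) * J)
  set B := C * (Cf * J)
  have hA : 0 ≤ A := by have := (abs_nonneg _).trans (hCd 0); positivity
  have hB : 0 ≤ B := by have := (hfpos 0).le.trans (hCf 0); positivity
  refine ⟨3126 * (3 * A + 16 * B + 1), exp 1, by positivity, one_lt_exp_iff.mpr one_pos,
    fun lam hlam a => ?_⟩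
  have hlam0 : 0 < lam := (exp_pos 1).trans_le hlam
  have hL : 0 ≤ 2 * π * a / lam := by positivity
  have hS := sum_le_of_split_at_log (Finset.Icc (-2 * (a : ℤ) + 1) (2 * (a : ℤ) - 1))
    (fun m => taperCoeff h (2 * π * m) ^ 2 *
      incrementIntegral f (2 * π * a / lam) (2 * π * m / lam)) hA hB hlam ?_ ?_
  · have hX := log_sq_div_le hlam
    have hY : 0 ≤ 1 / log lam ^ 3 := by
      have := log_nonneg ((one_le_exp_iff.mpr zero_le_one).trans hlam); positivity
    refine ⟨hS.trans ?_, hS.trans ?_⟩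
    · nlinarith [mul_nonneg hA hY, mul_nonneg hB hY, div_nonneg (sq_nonneg (log lam)) hlam0.le]
    · rw [div_eq_mul_one_div (3126 * _)]
      nlinarith [mul_nonneg hA hY, mul_nonneg hB hY]
  · intro m _
    calc _ ≤ C * (Cd * |2 * π * m / lam| * J) :=
          mul_le_mul (hC m).1 (incrementIntegral_le_of_abs_deriv_le hfpos hfdiff hf3 hL hCd _)
            (incrementIntegral_nonneg hfpos hL _) hC0
      _ = A * |(m : ℝ)| / lam := by
          rw [abs_div, abs_mul, abs_mul, abs_of_pos pi_pos, abs_of_pos hlam0, abs_two]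
          ring
  · intro m _ hm
    calc _ ≤ C * ((m : ℝ) ^ 4)⁻¹ * (Cf * J) :=
          mul_le_mul ((hC m).2 hm)
            (incrementIntegral_le_of_forall_le hfpos hfdiff.continuous hf3 hL hCf _)
            (incrementIntegral_nonneg hfpos hL _) (by positivity)
      _ = B * ((m : ℝ) ^ 4)⁻¹ := by ring

/-- Let `h` satisfy the smooth taper conditions (symmetric, support `[−1/2,1/2]`, twice
differentiable), so that `H(m) = ∫_{−1/2}^{1/2} h²(s) cos(2πms) ds` satisfies
`|H(m)| ≲ 1/m²`, and let `f : ℝ → ℝ` be positive, bounded, with `∫ f³ < ∞` and bounded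
derivative.  Then for all `a ∈ ℕ` and `λ` sufficiently large,
`∑_{m=−2a+1}^{2a−1} H(m)² ∫_{−2πa/λ}^{2πa/λ} f³(x)|f(ω_m + x) − f(x)| dx
  ≲ (log λ)²/λ + 1/(log λ)³`, and in particular this quantity is `O(1/(log λ)³)`. -/
theorem weighted_increment_sum_bound (h : ℝ → ℝ)
    (hsym : ∀ s, h (-s) = h s)
    (hsupp : ∀ s, s ∉ Set.Icc (-(1/2) : ℝ) (1/2) → h s = 0)
    (hsm : ContDiff ℝ 2 h)
    (f : ℝ → ℝ) (hfpos : ∀ x, 0 < f x) (hfbdd : ∃ Cf : ℝ, ∀ x, f x ≤ Cf)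
    (hf3 : Integrable fun x => f x ^ 3)
    (hfdiff : Differentiable ℝ f) (hfd : ∃ Cd : ℝ, ∀ x, |deriv f x| ≤ Cd) :
    ∃ K Λ : ℝ, 0 < K ∧ 1 < Λ ∧ ∀ lam : ℝ, Λ ≤ lam → ∀ a : ℕ,
      let S : ℝ := ∑ m ∈ Finset.Icc (-2 * (a : ℤ) + 1) (2 * (a : ℤ) - 1),
        (∫ s in (-(1/2) : ℝ)..(1/2), h s ^ 2 * Real.cos (2 * Real.pi * m * s)) ^ 2 *
          ∫ x in (-(2 * Real.pi * a / lam))..(2 * Real.pi * a / lam),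
            f x ^ 3 * |f (2 * Real.pi * m / lam + x) - f x|
      S ≤ K * ((Real.log lam) ^ 2 / lam + 1 / (Real.log lam) ^ 3) ∧
      S ≤ K / (Real.log lam) ^ 3 :=
  weighted_increment_sum_bound_general h hsupp hsm f hfpos hfbdd hf3 hfdiff hfd
end
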